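/- Every sequence u : ℕ → 𝔻² in the bidisc which converges to a point of the boundary ∂𝔻² is admissible with respect to the base point (0,0) and the Kobayashi distance d₂ of the bidisc. -/

import Mathlib

open Filter Set

noncomputable section

/-- The inverse hyperbolic tangent: `artanh r = (1/2) log ((1+r)/(1-r))`. -/
def artanh (r : ℝ) : ℝ := (1 / 2) * Real.log ((1 + r) / (1 - r))

/-- The Poincaré (Kobayashi) distance on the unit disc
`ρ(z,w) = artanh |(z - w)/(1 - conj w * z)|`. -/
def pd (z w : ℂ) : ℝ := artanh ‖(z - w) / (1 - (starRingEnd ℂ) w * z)‖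

/-- The Kobayashi distance of the bidisc. -/
def kd2 (z w : ℂ × ℂ) : ℝ := max (pd z.1 w.1) (pd z.2 w.2)

/-- The open unit bidisc. -/
def bidisc : Set (ℂ × ℂ) := {z : ℂ × ℂ | ‖z.1‖ < 1 ∧ ‖z.2‖ < 1}

/-- The horosphere in the bidisc of a sequence `u` with respect to base point `x`
and radius `R`. -/
def biE (x : ℂ × ℂ) (u : ℕ → ℂ × ℂ) (R : ℝ) : Set (ℂ × ℂ) :=
  {z : ℂ × ℂ | z ∈ bidisc ∧
    Filter.limsup (fun n => kd2 z (u n) - kd2 x (u n)) Filter.atTop < (1 / 2) * Real.log R}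

/-!
Along a sequence tending to a point `ζ` of the unit circle, `ρ(z, w) - ρ(0, w)` converges to the
horofunction `½ log (|ζ - z|² / (1 - |z|²))`, which equals `½ log ((1 - s) / (1 + s))` at `z = s ζ`
and so is as negative as we like for `s` close to `1`. A boundary point `p` of the bidisc has a
coordinate on the circle; there `ρ(0, ·)` tends to infinity, while a coordinate inside the disc
keeps both Poincaré terms bounded. Hence `d₂(s p, u n) - d₂(0, u n)` has the same limit
`½ log ((1 - s) / (1 + s))`, and `s p` lies in the horosphere of radius `R` once this is below
`½ log R`.
-/

open Topology ComplexConjugate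

lemma norm_one_sub_conj_mul_sq_sub_norm_sub_sq (z w : ℂ) :
    ‖1 - conj w * z‖ ^ 2 - ‖z - w‖ ^ 2 = (1 - ‖z‖ ^ 2) * (1 - ‖w‖ ^ 2) := by
  simp only [Complex.sq_norm, Complex.normSq_apply, Complex.mul_re, Complex.mul_im,
    Complex.sub_re, Complex.sub_im, Complex.conj_re, Complex.conj_im, Complex.one_re,
    Complex.one_im]
  ring

lemma norm_sub_lt_norm_one_sub_conj_mul {z w : ℂ} (hz : ‖z‖ < 1) (hw : ‖w‖ < 1) :
    ‖z - w‖ < ‖1 - conj w * z‖ := by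
  have hprod : 0 < (1 - ‖z‖ ^ 2) * (1 - ‖w‖ ^ 2) := by
    have := norm_nonneg z; have := norm_nonneg w
    apply mul_pos <;> nlinarith
  nlinarith [norm_one_sub_conj_mul_sq_sub_norm_sub_sq z w, norm_nonneg (z - w),
    norm_nonneg (1 - conj w * z)]

lemma pd_eq_half_log {z w : ℂ} (hz : ‖z‖ < 1) (hw : ‖w‖ < 1) :
    pd z w = 1 / 2 * Real.log
      ((‖1 - conj w * z‖ + ‖z - w‖) ^ 2 / ((1 - ‖z‖ ^ 2) * (1 - ‖w‖ ^ 2))) := by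
  have hND := norm_sub_lt_norm_one_sub_conj_mul hz hw
  have hN := norm_nonneg (z - w)
  rw [pd, artanh, norm_div, ← norm_one_sub_conj_mul_sq_sub_norm_sub_sq]
  generalize ‖1 - conj w * z‖ = D at hND ⊢
  generalize ‖z - w‖ = N at hND hN ⊢
  have hD : D ≠ 0 := by linarith
  have hDN : D - N ≠ 0 := by linarith
  have hsq : D ^ 2 - N ^ 2 = (D - N) * (D + N) := by ring
  have hDN' : D + N ≠ 0 := by linarith
  rw [hsq]
  field_simp

lemma pd_zero_left (w : ℂ) : pd 0 w = artanh ‖w‖ := by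
  simp [pd]

lemma pd_sub_pd_zero_left {z w : ℂ} (hz : ‖z‖ < 1) (hw : ‖w‖ < 1) :
    pd z w - pd 0 w = 1 / 2 * Real.log
      ((‖1 - conj w * z‖ + ‖z - w‖) ^ 2 / ((1 - ‖z‖ ^ 2) * (1 + ‖w‖) ^ 2)) := by
  have hND := norm_sub_lt_norm_one_sub_conj_mul hz hw
  have hD : 0 < ‖1 - conj w * z‖ := (norm_nonneg _).trans_lt hND
  have hz' : 0 < 1 - ‖z‖ ^ 2 := by nlinarith [norm_nonneg z]
  have hw0 := norm_nonneg w
  have hw' : 0 < 1 - ‖w‖ := by linarith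
  have hw2 : 1 - ‖w‖ ^ 2 = (1 - ‖w‖) * (1 + ‖w‖) := by ring
  rw [pd_eq_half_log hz hw, pd_zero_left, artanh, ← mul_sub, hw2,
    ← Real.log_div (by positivity) (by positivity)]
  congr 2
  field_simp

lemma norm_one_sub_conj_mul_of_norm_eq_one {ζ : ℂ} (hζ : ‖ζ‖ = 1) (z : ℂ) :
    ‖1 - conj ζ * z‖ = ‖ζ - z‖ := by
  have hconj : conj ζ * ζ = 1 := by
    rw [mul_comm, Complex.mul_conj, Complex.normSq_eq_norm_sq, hζ]; norm_num
  rw [← hconj, ← mul_sub, norm_mul, Complex.norm_conj, hζ, one_mul]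

lemma tendsto_pd_sub_pd_zero_left {α : Type*} {l : Filter α} {w : α → ℂ} {ζ z : ℂ}
    (hw : ∀ a, ‖w a‖ < 1) (hζ : ‖ζ‖ = 1) (hwζ : Tendsto w l (𝓝 ζ)) (hz : ‖z‖ < 1) :
    Tendsto (fun a => pd z (w a) - pd 0 (w a)) l
      (𝓝 (1 / 2 * Real.log (‖ζ - z‖ ^ 2 / (1 - ‖z‖ ^ 2)))) := by
  have hz' : 0 < 1 - ‖z‖ ^ 2 := by nlinarith [norm_nonneg z]
  have hζz : 0 < ‖ζ - z‖ :=
    norm_pos_iff.2 (sub_ne_zero.2 fun h => by rw [← h, hζ] at hz; exact hz.false)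
  refine Tendsto.congr (fun a => (pd_sub_pd_zero_left hz (hw a)).symm) ?_
  have hden : (1 - ‖z‖ ^ 2) * (1 + ‖ζ‖) ^ 2 ≠ 0 := by rw [hζ]; positivity
  have hF : ContinuousAt (fun v : ℂ =>
      (‖1 - conj v * z‖ + ‖z - v‖) ^ 2 / ((1 - ‖z‖ ^ 2) * (1 + ‖v‖) ^ 2)) ζ := by
    fun_prop (disch := exact hden)
  have hval : (‖1 - conj ζ * z‖ + ‖z - ζ‖) ^ 2 / ((1 - ‖z‖ ^ 2) * (1 + ‖ζ‖) ^ 2)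
      = ‖ζ - z‖ ^ 2 / (1 - ‖z‖ ^ 2) := by
    rw [norm_one_sub_conj_mul_of_norm_eq_one hζ, norm_sub_rev z, hζ]
    field_simp
  have hlim := hF.tendsto.comp hwζ
  rw [Function.comp_def, hval] at hlim
  exact (hlim.log (by positivity)).const_mul _

lemma tendsto_pd_smul_sub_pd_zero_left {α : Type*} {l : Filter α} {w : α → ℂ} {ζ : ℂ}
    (hw : ∀ a, ‖w a‖ < 1) (hζ : ‖ζ‖ = 1) (hwζ : Tendsto w l (𝓝 ζ)) {s : ℝ} (hs : |s| < 1) :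
    Tendsto (fun a => pd (s • ζ) (w a) - pd 0 (w a)) l
      (𝓝 (1 / 2 * Real.log ((1 - s) / (1 + s)))) := by
  have hsζ : ‖s • ζ‖ = |s| := by rw [norm_smul, hζ, mul_one, Real.norm_eq_abs]
  convert tendsto_pd_sub_pd_zero_left hw hζ hwζ (hsζ.trans_lt hs) using 4
  obtain ⟨hs₁, hs₂⟩ := abs_lt.1 hs
  have hsub : ζ - s • ζ = (1 - s) • ζ := by rw [sub_smul, one_smul]
  rw [hsζ, hsub, norm_smul, hζ, mul_one, Real.norm_eq_abs, abs_of_pos (by linarith), sq_abs]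
  have : 1 - s ^ 2 = (1 - s) * (1 + s) := by ring
  rw [this]
  field_simp

lemma continuousAt_pd {z q : ℂ} (hz : ‖z‖ < 1) (hq : ‖q‖ < 1) : ContinuousAt (pd z) q := by
  have hlt := norm_sub_lt_norm_one_sub_conj_mul hz hq
  have hpos : 0 < ‖1 - conj q * z‖ := (norm_nonneg _).trans_lt hlt
  have hden : 1 - conj q * z ≠ 0 := norm_pos_iff.1 hpos
  have hr : ‖(z - q) / (1 - conj q * z)‖ < 1 := by rwa [norm_div, div_lt_one hpos]
  have hsub : 1 - ‖(z - q) / (1 - conj q * z)‖ ≠ 0 := by linarith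
  have hlog : (1 + ‖(z - q) / (1 - conj q * z)‖) / (1 - ‖(z - q) / (1 - conj q * z)‖) ≠ 0 :=
    div_ne_zero (by positivity) hsub
  unfold pd artanh
  fun_prop (disch := assumption)

lemma isBoundedUnder_le_pd {α : Type*} {l : Filter α} {v : α → ℂ} {z q : ℂ} (hz : ‖z‖ < 1)
    (hq : ‖q‖ < 1) (hvq : Tendsto v l (𝓝 q)) : IsBoundedUnder (· ≤ ·) l (fun a => pd z (v a)) :=
  ((continuousAt_pd hz hq).tendsto.comp hvq).isBoundedUnder_le

lemma tendsto_artanh_nhdsLT_one : Tendsto artanh (𝓝[<] 1) atTop := by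
  have hnum : Tendsto (fun r : ℝ => 1 + r) (𝓝[<] 1) (𝓝 2) :=
    ((continuous_const.add continuous_id).tendsto' 1 2 (by norm_num)).mono_left
      nhdsWithin_le_nhds
  have hden : Tendsto (fun r : ℝ => 1 - r) (𝓝[<] 1) (𝓝[>] 0) := by
    refine tendsto_nhdsWithin_iff.2 ⟨?_, ?_⟩
    · exact ((continuous_const.sub continuous_id).tendsto' 1 0 (by norm_num)).mono_left
        nhdsWithin_le_nhds
    · filter_upwards [self_mem_nhdsWithin] with r (hr : r < 1)
      exact sub_pos.2 hr
  have hquot := hnum.pos_mul_atTop two_pos (tendsto_inv_nhdsGT_zero.comp hden)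
  exact (Real.tendsto_log_atTop.comp hquot).const_mul_atTop one_half_pos

lemma tendsto_pd_zero_left_atTop {α : Type*} {l : Filter α} {w : α → ℂ} {ζ : ℂ}
    (hw : ∀ a, ‖w a‖ < 1) (hζ : ‖ζ‖ = 1) (hwζ : Tendsto w l (𝓝 ζ)) :
    Tendsto (fun a => pd 0 (w a)) l atTop := by
  simp only [pd_zero_left]
  refine tendsto_artanh_nhdsLT_one.comp (tendsto_nhdsWithin_iff.2 ⟨?_, Eventually.of_forall hw⟩)
  simpa [hζ] using hwζ.norm

section MaxSubMax

variable {α : Type*} {l : Filter α} {x x' y y' : α → ℝ} {c : ℝ}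

lemma tendsto_max_sub_max (hx : Tendsto (fun a => x a - x' a) l (𝓝 c))
    (hy : Tendsto (fun a => y a - y' a) l (𝓝 c)) :
    Tendsto (fun a => max (x a) (y a) - max (x' a) (y' a)) l (𝓝 c) := by
  have hmin := hx.min hy
  have hmax := hx.max hy
  rw [min_self] at hmin
  rw [max_self] at hmax
  refine tendsto_of_tendsto_of_tendsto_of_le_of_le hmin hmax (fun a => ?_)
    (fun a => max_sub_max_le_max _ _ _ _)
  rcases le_max_iff.1 (max_sub_max_le_max (x' a) (y' a) (x a) (y a)) with h | h
  · exact min_le_of_left_le (by linarith)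
  · exact min_le_of_right_le (by linarith)

lemma tendsto_max_sub_max_of_tendsto_atTop (hx : Tendsto (fun a => x a - x' a) l (𝓝 c))
    (hx' : Tendsto x' l atTop) (hy : IsBoundedUnder (· ≤ ·) l y)
    (hy' : IsBoundedUnder (· ≤ ·) l y') :
    Tendsto (fun a => max (x a) (y a) - max (x' a) (y' a)) l (𝓝 c) := by
  obtain ⟨b, hb⟩ := hy.eventually_le
  obtain ⟨b', hb'⟩ := hy'.eventually_le
  have hxtop : Tendsto x l atTop := by simpa using hx.add_atTop hx'
  refine hx.congr' ?_
  filter_upwards [hb, hb', hxtop.eventually_ge_atTop b, hx'.eventually_ge_atTop b']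
    with a hya hya' hxa hxa'
  rw [max_eq_left (hya.trans hxa), max_eq_left (hya'.trans hxa')]

end MaxSubMax

section Bidisc

lemma bidisc_eq_ball : bidisc = Metric.ball (0 : ℂ × ℂ) 1 := by
  ext z
  simp [bidisc, Prod.norm_def]

lemma norm_eq_one_of_mem_frontier_bidisc {p : ℂ × ℂ} (hp : p ∈ frontier bidisc) : ‖p‖ = 1 := by
  rwa [bidisc_eq_ball, frontier_ball _ one_ne_zero, mem_sphere_zero_iff_norm] at hp

variable {α : Type*} {l : Filter α} {w : α → ℂ × ℂ} {p : ℂ × ℂ}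

lemma tendsto_kd2_zero_left_atTop (hw : ∀ a, w a ∈ bidisc) (hp : ‖p‖ = 1)
    (hwp : Tendsto w l (𝓝 p)) : Tendsto (fun a => kd2 (0, 0) (w a)) l atTop := by
  rcases max_choice ‖p.1‖ ‖p.2‖ with h | h <;> rw [← Prod.norm_def, hp] at h
  · exact tendsto_atTop_mono (fun a => le_max_left _ _)
      (tendsto_pd_zero_left_atTop (fun a => (hw a).1) h.symm hwp.fst_nhds)
  · exact tendsto_atTop_mono (fun a => le_max_right _ _)
      (tendsto_pd_zero_left_atTop (fun a => (hw a).2) h.symm hwp.snd_nhds)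

lemma tendsto_kd2_smul_sub_kd2_zero_left (hw : ∀ a, w a ∈ bidisc) (hp : ‖p‖ = 1)
    (hwp : Tendsto w l (𝓝 p)) {s : ℝ} (hs : |s| < 1) :
    Tendsto (fun a => kd2 (s • p) (w a) - kd2 (0, 0) (w a)) l
      (𝓝 (1 / 2 * Real.log ((1 - s) / (1 + s)))) := by
  have hsmul : ∀ {q : ℂ}, ‖q‖ < 1 → ‖s • q‖ < 1 := fun {q} hq => by
    rw [norm_smul, Real.norm_eq_abs]
    nlinarith [abs_nonneg s, norm_nonneg q]
  have hw₁ : ∀ a, ‖(w a).1‖ < 1 := fun a => (hw a).1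
  have hw₂ : ∀ a, ‖(w a).2‖ < 1 := fun a => (hw a).2
  have hp₁ : ‖p.1‖ ≤ 1 := hp ▸ norm_fst_le p
  have hp₂ : ‖p.2‖ ≤ 1 := hp ▸ norm_snd_le p
  simp only [kd2, Prod.smul_fst, Prod.smul_snd]
  rcases hp₁.eq_or_lt with h₁ | h₁ <;> rcases hp₂.eq_or_lt with h₂ | h₂
  · exact tendsto_max_sub_max (tendsto_pd_smul_sub_pd_zero_left hw₁ h₁ hwp.fst_nhds hs)
      (tendsto_pd_smul_sub_pd_zero_left hw₂ h₂ hwp.snd_nhds hs)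
  · exact tendsto_max_sub_max_of_tendsto_atTop
      (tendsto_pd_smul_sub_pd_zero_left hw₁ h₁ hwp.fst_nhds hs)
      (tendsto_pd_zero_left_atTop hw₁ h₁ hwp.fst_nhds)
      (isBoundedUnder_le_pd (hsmul h₂) h₂ hwp.snd_nhds)
      (isBoundedUnder_le_pd (by simp) h₂ hwp.snd_nhds)
  · simpa only [max_comm] using tendsto_max_sub_max_of_tendsto_atTop
      (tendsto_pd_smul_sub_pd_zero_left hw₂ h₂ hwp.snd_nhds hs)
      (tendsto_pd_zero_left_atTop hw₂ h₂ hwp.snd_nhds)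
      (isBoundedUnder_le_pd (hsmul h₁) h₁ hwp.fst_nhds)
      (isBoundedUnder_le_pd (by simp) h₁ hwp.fst_nhds)
  · rw [Prod.norm_def] at hp
    exact absurd hp (max_lt h₁ h₂).ne

end Bidisc

theorem bidisc_boundary_sequence_admissible (u : ℕ → ℂ × ℂ) (hu : ∀ n, u n ∈ bidisc)
    (p : ℂ × ℂ) (hp : p ∈ frontier bidisc)
    (hconv : Filter.Tendsto u Filter.atTop (nhds p)) :
    Filter.Tendsto (fun n => kd2 ((0 : ℂ), (0 : ℂ)) (u n)) Filter.atTop Filter.atTop ∧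
      ∀ R > (0 : ℝ), (biE ((0 : ℂ), (0 : ℂ)) u R).Nonempty := by
  have hp₁ : ‖p‖ = 1 := norm_eq_one_of_mem_frontier_bidisc hp
  refine ⟨tendsto_kd2_zero_left_atTop hu hp₁ hconv, fun R hR => ?_⟩
  -- `s` solves `(1 - s) / (1 + s) = R / (1 + R)`
  set s : ℝ := (1 + 2 * R)⁻¹ with hs_def
  have hs₀ : 0 < s := by positivity
  have hs₁ : s < 1 := inv_lt_one_of_one_lt₀ (by linarith)
  have hsR : (1 - s) / (1 + s) < R := by
    rw [div_lt_iff₀ (by linarith), hs_def]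
    field_simp
    nlinarith
  refine ⟨s • p, ?_, ?_⟩
  · rw [bidisc_eq_ball, mem_ball_zero_iff, norm_smul, hp₁, mul_one, Real.norm_eq_abs,
      abs_of_pos hs₀]
    exact hs₁
  · have hs : |s| < 1 := by rwa [abs_of_pos hs₀]
    rw [(tendsto_kd2_smul_sub_kd2_zero_left hu hp₁ hconv hs).limsup_eq]
    gcongr
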